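/- arXiv:1310.5895 — 2 statements merged into one kernel-verified Lean document; each statement's English description precedes it below -/
import Mathlib

section
/- Let n, s ∈ ℕ with s ≤ n. For every x ∈ ℂ^n with at most s non-zero entries and every y ∈ ℂ^n, it holds that ‖(x,0) ⊛ (y,0)‖ ≤ √s·‖x‖·‖y‖, where (x,0), (y,0) ∈ ℂ^{2n−1} denote the vectors padded by n−1 zeros and ⊛ is the circular convolution in ℂ^{2n−1}. -/
open scoped BigOperators

/-- Circular convolution on `ℂ^m`: `(u ⊛ v)_k = ∑_l u_l v_{(k-l) mod m}`. -/
noncomputable def cconv {m : ℕ} (u v : Fin m → ℂ) : Fin m → ℂ :=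
  fun k => ∑ l : Fin m, u l * v (k - l)

/-- Circular correlation on `ℂ^m`: `(u ⋆ v)_k = ∑_l u_l conj (v_{(k+l) mod m})`. -/
noncomputable def ccorr {m : ℕ} (u v : Fin m → ℂ) : Fin m → ℂ :=
  fun k => ∑ l : Fin m, u l * (starRingEnd ℂ) (v (k + l))

/-- Euclidean (ℓ²) norm of a vector. -/
noncomputable def euclNorm {m : ℕ} {E : Type*} [SeminormedAddGroup E] (x : Fin m → E) : ℝ :=
  Real.sqrt (∑ i, ‖x i‖ ^ 2)

/-- Zero padding `ℂ^n → ℂ^m` (entries of `x` followed by zeros). -/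
def pad (n m : ℕ) (x : Fin n → ℂ) : Fin m → ℂ :=
  fun k => if h : (k : ℕ) < n then x ⟨k, h⟩ else 0

/-- `x` has at most `s` nonzero entries. -/
def sparse {n : ℕ} (s : ℕ) (x : Fin n → ℂ) : Prop :=
  Set.ncard {i | x i ≠ 0} ≤ s

/-- The unitary DFT matrix `F_{kl} = m^{-1/2} exp(2πi kl/m)`. -/
noncomputable def dft (m : ℕ) : Matrix (Fin m) (Fin m) ℂ :=
  fun k l => ((Real.sqrt m : ℝ) : ℂ)⁻¹ *
    Complex.exp (2 * (Real.pi : ℂ) * Complex.I * ((k : ℕ) : ℂ) * ((l : ℕ) : ℂ) / (m : ℂ))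

/-- Cyclic shift: `(S x)_k = x_{(k-1) mod m}`. -/
def shiftOp {m : ℕ} (x : Fin m → ℂ) : Fin m → ℂ :=
  fun k => x ⟨((k : ℕ) + (m - 1)) % m, Nat.mod_lt _ (by have := k.isLt; omega)⟩

/-- Time reversal: `(Γ x)_k = x_{(-k) mod m}`. -/
def rev {m : ℕ} (u : Fin m → ℂ) : Fin m → ℂ := fun k => u (-k)

/-- Symmetrization `𝒮 : ℂ^n → ℂ^{2n-1}`,
`𝒮(x) = (x_0, …, x_{n-1}, conj x_{n-1}, …, conj x_1)`. -/
noncomputable def symmetrize (n : ℕ) (x : Fin n → ℂ) : Fin (2 * n - 1) → ℂ :=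
  fun k =>
    if h : (k : ℕ) < n then x ⟨k, h⟩
    else (starRingEnd ℂ) (x ⟨2 * n - 1 - (k : ℕ), by have := k.isLt; omega⟩)

/-- Zero-padded symmetrization `𝒮_z : ℂ^n → ℂ^{4n-3}`, `𝒮_z(x) = 𝒮((x, 0_{n-1}))`. -/
noncomputable def symmetrizeZ (n : ℕ) (x : Fin n → ℂ) : Fin (4 * n - 3) → ℂ :=
  fun k => symmetrize (2 * n - 1) (pad n (2 * n - 1) x) ⟨(k : ℕ), by have := k.isLt; omega⟩

/-- `𝒮_z' : ℂ^n → ℂ^{4n-1}`,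
`𝒮_z'(x) = (0_n, x_0, …, x_{n-1}, conj x_{n-1}, …, conj x_0, 0_{n-1})`. -/
noncomputable def symmetrizeZ' (n : ℕ) (x : Fin n → ℂ) : Fin (4 * n - 1) → ℂ :=
  fun k =>
    if _ : (k : ℕ) < n then 0
    else if h2 : (k : ℕ) < 2 * n then x ⟨(k : ℕ) - n, by omega⟩
    else if h3 : (k : ℕ) < 3 * n then (starRingEnd ℂ) (x ⟨3 * n - 1 - (k : ℕ), by omega⟩)
    else 0

/-! Sparse Young inequality: by Cauchy–Schwarz over the support `S` of `u`, each entry of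
`u ⊛ v` satisfies `|(u ⊛ v)_k|² ≤ ‖u‖² ∑_{l ∈ S} |v_{k-l}|²`; summing over `k`, every shifted copy
of `v` contributes `‖v‖²`, so `‖u ⊛ v‖² ≤ |S| ‖u‖² ‖v‖²`. Zero padding to length `2n - 1` changes
neither norms nor sparsity. -/

section Convolution

variable {m : ℕ}

lemma sum_norm_sq_sub_right (v : Fin m → ℂ) (l : Fin m) :
    ∑ k, ‖v (k - l)‖ ^ 2 = ∑ k, ‖v k‖ ^ 2 := by
  have : NeZero m := ⟨fun hm => (hm ▸ l).elim0⟩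
  exact Fintype.sum_equiv (Equiv.subRight l) _ _ fun _ => rfl

lemma norm_cconv_sq_le (u v : Fin m → ℂ) {S : Finset (Fin m)} (hS : ∀ l ∉ S, u l = 0)
    (k : Fin m) :
    ‖cconv u v k‖ ^ 2 ≤ (∑ l ∈ S, ‖u l‖ ^ 2) * ∑ l ∈ S, ‖v (k - l)‖ ^ 2 :=
  calc ‖cconv u v k‖ ^ 2
      = ‖∑ l ∈ S, u l * v (k - l)‖ ^ 2 := by
        rw [cconv, ← Finset.sum_subset (Finset.subset_univ S) fun l _ hl => by simp [hS l hl]]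
    _ ≤ (∑ l ∈ S, ‖u l‖ * ‖v (k - l)‖) ^ 2 := by
        gcongr
        exact (norm_sum_le _ _).trans_eq (by simp only [norm_mul])
    _ ≤ (∑ l ∈ S, ‖u l‖ ^ 2) * ∑ l ∈ S, ‖v (k - l)‖ ^ 2 :=
        Finset.sum_mul_sq_le_sq_mul_sq S _ _

lemma euclNorm_cconv_le_of_sparse {s : ℕ} {u : Fin m → ℂ} (hu : sparse s u) (v : Fin m → ℂ) :
    euclNorm (cconv u v) ≤ Real.sqrt s * euclNorm u * euclNorm v := by
  set S := Finset.univ.filter fun l => u l ≠ 0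
  have hS : ∀ l ∉ S, u l = 0 := by simp [S]
  have hcard : (S.card : ℝ) ≤ s := by
    rw [sparse, ← Finset.coe_filter_univ, Set.ncard_coe_finset] at hu
    exact_mod_cast hu
  have hSu : ∑ l ∈ S, ‖u l‖ ^ 2 = ∑ l, ‖u l‖ ^ 2 :=
    Finset.sum_subset (Finset.subset_univ S) fun l _ hl => by simp [hS l hl]
  have hsq : ∑ k, ‖cconv u v k‖ ^ 2 ≤ s * (∑ l, ‖u l‖ ^ 2) * ∑ l, ‖v l‖ ^ 2 :=
    calc ∑ k, ‖cconv u v k‖ ^ 2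
        ≤ ∑ k, (∑ l ∈ S, ‖u l‖ ^ 2) * ∑ l ∈ S, ‖v (k - l)‖ ^ 2 :=
          Finset.sum_le_sum fun k _ => norm_cconv_sq_le u v hS k
      _ = S.card * (∑ l, ‖u l‖ ^ 2) * ∑ l, ‖v l‖ ^ 2 := by
          rw [← Finset.mul_sum, Finset.sum_comm, hSu]
          simp only [sum_norm_sq_sub_right, Finset.sum_const, nsmul_eq_mul]
          ring
      _ ≤ s * (∑ l, ‖u l‖ ^ 2) * ∑ l, ‖v l‖ ^ 2 := by gcongr
  calc euclNorm (cconv u v) ≤ Real.sqrt (s * (∑ l, ‖u l‖ ^ 2) * ∑ l, ‖v l‖ ^ 2) :=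
        Real.sqrt_le_sqrt hsq
    _ = Real.sqrt s * euclNorm u * euclNorm v := by
        rw [euclNorm, euclNorm, Real.sqrt_mul (by positivity), Real.sqrt_mul (by positivity)]

end Convolution

section Padding

variable {n m : ℕ}

lemma pad_castLE (hnm : n ≤ m) (x : Fin n → ℂ) (j : Fin n) :
    pad n m x (Fin.castLE hnm j) = x j := by
  simp [pad]

lemma pad_eq_zero_of_notMem_range (hnm : n ≤ m) (x : Fin n → ℂ) {i : Fin m}
    (hi : i ∉ Set.range (Fin.castLE hnm)) :
    pad n m x i = 0 :=
  dif_neg fun h => hi ⟨⟨i, h⟩, rfl⟩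

lemma euclNorm_pad (hnm : n ≤ m) (x : Fin n → ℂ) : euclNorm (pad n m x) = euclNorm x := by
  rw [euclNorm, euclNorm, Fintype.sum_of_injective _ (Fin.castLE_injective hnm)
    (fun j => ‖x j‖ ^ 2) (fun i => ‖pad n m x i‖ ^ 2)
    (fun i hi => by simp [pad_eq_zero_of_notMem_range hnm x hi])
    (fun j => by rw [pad_castLE])]

lemma sparse_pad (hnm : n ≤ m) (x : Fin n → ℂ) {s : ℕ} (hx : sparse s x) :
    sparse s (pad n m x) := by
  have hsub : {i | pad n m x i ≠ 0} ⊆ Fin.castLE hnm '' {j | x j ≠ 0} := by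
    intro i hi
    by_cases hr : i ∈ Set.range (Fin.castLE hnm)
    · obtain ⟨j, rfl⟩ := hr
      exact ⟨j, by simpa [pad_castLE] using hi, rfl⟩
    · exact absurd (pad_eq_zero_of_notMem_range hnm x hr) hi
  calc Set.ncard {i | pad n m x i ≠ 0}
      ≤ (Fin.castLE hnm '' {j | x j ≠ 0}).ncard := Set.ncard_le_ncard hsub
    _ = Set.ncard {j | x j ≠ 0} := Set.ncard_image_of_injective _ (Fin.castLE_injective hnm)
    _ ≤ s := hx

end Padding

theorem zero_padded_cconv_upper_bound_general (n s : ℕ)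
    (x y : Fin n → ℂ) (hx : sparse s x) :
    euclNorm (cconv (pad n (2 * n - 1) x) (pad n (2 * n - 1) y)) ≤
      Real.sqrt s * euclNorm x * euclNorm y := by
  have hnm : n ≤ 2 * n - 1 := by omega
  simpa only [euclNorm_pad hnm] using euclNorm_cconv_le_of_sparse (sparse_pad hnm x hx) (pad n _ y)

/-- Upper bound for the zero-padded circular convolution of an `s`-sparse vector. -/
theorem zero_padded_cconv_upper_bound (n s : ℕ) (hsn : s ≤ n)
    (x y : Fin n → ℂ) (hx : sparse s x) :
    euclNorm (cconv (pad n (2 * n - 1) x) (pad n (2 * n - 1) y)) ≤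
      Real.sqrt s * euclNorm x * euclNorm y :=
  zero_padded_cconv_upper_bound_general n s x y hx
end

section
/- Let n ∈ ℕ, n ≥ 1, and set ñ = 4n−3. Let F be the ñ×ñ unitary DFT matrix and 𝒮_z : ℂ^n → ℂ^{ñ} the zero-padded symmetrization. Then for all x₁, x₂ ∈ ℂ^n with (x₁)_0, (x₂)_0 ∈ ℝ, it holds that √ñ · ‖ |F 𝒮_z(x₁)|² − |F 𝒮_z(x₂)|² ‖ = ‖ 𝒮_z(x₁ − x₂) ⊛ 𝒮_z(x₁ + x₂) ‖, where ⊛ is the circular convolution in ℂ^{ñ}. -/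
open scoped BigOperators

/-!
If `conj (u l) = u (-l)` for all `l` (as for `u = 𝒮_z x` with `x₀` real), the DFT of `u` is real.
So for `a = 𝒮_z x₁`, `b = 𝒮_z x₂` we have `|Fa|² - |Fb|² = (Fa - Fb)(Fa + Fb)`, which by
linearity of `𝒮_z` and the convolution theorem `F(u ⊛ v) = √ñ · Fu · Fv` equals
`F(𝒮_z(x₁ - x₂) ⊛ 𝒮_z(x₁ + x₂)) / √ñ`; since `F` is unitary, taking norms gives the claim. The convolution theorem holds because the `k`-th
DFT coefficient evaluates the polynomial `∑ⱼ u j Xʲ` at an `ñ`-th root of unity, and circular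
convolution is multiplication of such polynomials modulo `X ^ ñ - 1`.
-/

open Finset Matrix
open scoped ComplexConjugate

section RootsOfUnity

variable {m : ℕ}

lemma pow_val_add {M : Type*} [Monoid M] {ω : M} (hω : ω ^ m = 1) (a b : Fin m) :
    ω ^ ((a + b : Fin m) : ℕ) = ω ^ (a : ℕ) * ω ^ (b : ℕ) := by
  rw [Fin.val_add, ← pow_add]
  calc ω ^ (((a : ℕ) + b) % m)
      = ω ^ (((a : ℕ) + b) % m) * (ω ^ m) ^ (((a : ℕ) + b) / m) := by rw [hω, one_pow, mul_one]
    _ = ω ^ ((a : ℕ) + b) := by rw [← pow_mul, ← pow_add, Nat.mod_add_div]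

lemma conj_pow_val [NeZero m] {ω : ℂ} (hω : ω ^ m = 1) (a : Fin m) :
    conj (ω ^ (a : ℕ)) = ω ^ ((-a : Fin m) : ℕ) := by
  have hnorm : ‖ω ^ (a : ℕ)‖ = 1 := by
    rw [norm_pow, Complex.norm_eq_one_of_pow_eq_one hω (NeZero.ne m), one_pow]
  rw [← Complex.inv_eq_conj hnorm, eq_comm]
  refine eq_inv_of_mul_eq_one_left ?_
  rw [← pow_val_add hω, neg_add_cancel, Fin.val_zero, pow_zero]

lemma sum_pow_pow_val_eq_ite [NeZero m] {ζ : ℂ} (hζ : IsPrimitiveRoot ζ m) (d : Fin m) :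
    ∑ k : Fin m, (ζ ^ (d : ℕ)) ^ (k : ℕ) = if d = 0 then (m : ℂ) else 0 := by
  rw [Fin.sum_univ_eq_sum_range (fun k => (ζ ^ (d : ℕ)) ^ k)]
  split_ifs with hd
  · simp [hd]
  · have hne : ζ ^ (d : ℕ) ≠ 1 :=
      hζ.pow_ne_one_of_pos_of_lt (Fin.val_ne_zero_iff.mpr hd) d.isLt
    rw [geom_sum_eq hne, ← pow_mul, mul_comm, pow_mul, hζ.pow_eq_one, one_pow, sub_self, zero_div]

end RootsOfUnity

section PolyEval

variable {m : ℕ}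

noncomputable def polyEval (ω : ℂ) (u : Fin m → ℂ) : ℂ :=
  ∑ j : Fin m, u j * ω ^ (j : ℕ)

variable [NeZero m] {ω : ℂ}

lemma polyEval_cconv (hω : ω ^ m = 1) (a b : Fin m → ℂ) :
    polyEval ω (cconv a b) = polyEval ω a * polyEval ω b := by
  rw [polyEval, polyEval, polyEval, sum_mul_sum]
  simp only [cconv, sum_mul]
  rw [sum_comm]
  refine sum_congr rfl fun l _ => Fintype.sum_equiv (Equiv.subRight l) _ _ fun j => ?_
  rw [Equiv.subRight_apply, ← sub_add_cancel j l, pow_val_add hω, add_sub_cancel_right]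
  ring

lemma conj_polyEval_of_conj_eq_neg (hω : ω ^ m = 1) {u : Fin m → ℂ}
    (hu : ∀ l, conj (u l) = u (-l)) : conj (polyEval ω u) = polyEval ω u := by
  simp only [polyEval, map_sum, map_mul, hu, conj_pow_val hω]
  exact Fintype.sum_equiv (Equiv.neg (Fin m)) _ _ fun _ => rfl

end PolyEval

section DFT

variable {m : ℕ}

noncomputable def dftRoot (m : ℕ) : ℂ :=
  Complex.exp (2 * Real.pi * Complex.I / m)

lemma isPrimitiveRoot_dftRoot [NeZero m] : IsPrimitiveRoot (dftRoot m) m :=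
  Complex.isPrimitiveRoot_exp m (NeZero.ne m)

lemma dftRoot_pow_pow_eq_one [NeZero m] (k : ℕ) : (dftRoot m ^ k) ^ m = 1 := by
  rw [← pow_mul, mul_comm, pow_mul, isPrimitiveRoot_dftRoot.pow_eq_one, one_pow]

lemma dft_apply (k l : Fin m) :
    dft m k l = ((√m : ℝ) : ℂ)⁻¹ * (dftRoot m ^ (k : ℕ)) ^ (l : ℕ) := by
  rw [dft, dftRoot, ← Complex.exp_nat_mul, ← Complex.exp_nat_mul]
  congr 2
  ring

lemma dft_mulVec_apply (u : Fin m → ℂ) (k : Fin m) :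
    (dft m *ᵥ u) k = ((√m : ℝ) : ℂ)⁻¹ * polyEval (dftRoot m ^ (k : ℕ)) u := by
  simp only [mulVec, dotProduct, dft_apply, polyEval, mul_sum]
  exact sum_congr rfl fun l _ => by ring

variable [NeZero m]

lemma dft_mem_unitaryGroup : dft m ∈ unitaryGroup (Fin m) ℂ := by
  rw [mem_unitaryGroup_iff']
  ext l l'
  have hc : (((√m : ℝ) : ℂ)⁻¹) ^ 2 = (m : ℂ)⁻¹ := by
    rw [inv_pow, ← Complex.ofReal_pow, Real.sq_sqrt (Nat.cast_nonneg m), Complex.ofReal_natCast]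
  calc (star (dft m) * dft m) l l'
      = (m : ℂ)⁻¹ * ∑ k : Fin m, (dftRoot m ^ ((-l + l' : Fin m) : ℕ)) ^ (k : ℕ) := by
        simp only [mul_apply, star_apply, dft_apply, mul_sum, star_mul', ← hc]
        refine sum_congr rfl fun k _ => ?_
        have hω := dftRoot_pow_pow_eq_one (m := m) k
        rw [Complex.star_def, map_inv₀, Complex.conj_ofReal, conj_pow_val hω,
          pow_right_comm _ _ (k : ℕ), pow_val_add hω]
        ring
    _ = (1 : Matrix (Fin m) (Fin m) ℂ) l l' := by
        rw [sum_pow_pow_val_eq_ite isPrimitiveRoot_dftRoot, one_apply]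
        simp only [neg_add_eq_zero]
        split_ifs
        · exact inv_mul_cancel₀ (Nat.cast_ne_zero.mpr (NeZero.ne m))
        · exact mul_zero _

lemma dft_mulVec_cconv (a b : Fin m → ℂ) (k : Fin m) :
    (dft m *ᵥ cconv a b) k = ((√m : ℝ) : ℂ) * ((dft m *ᵥ a) k * (dft m *ᵥ b) k) := by
  have hm : ((√m : ℝ) : ℂ) ≠ 0 := by
    exact_mod_cast (Real.sqrt_pos.mpr (Nat.cast_pos.mpr (NeZero.pos m))).ne'
  simp only [dft_mulVec_apply, polyEval_cconv (dftRoot_pow_pow_eq_one _)]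
  field_simp

lemma conj_dft_mulVec_of_conj_eq_neg {u : Fin m → ℂ} (hu : ∀ l, conj (u l) = u (-l))
    (k : Fin m) : conj ((dft m *ᵥ u) k) = (dft m *ᵥ u) k := by
  rw [dft_mulVec_apply, map_mul, conj_polyEval_of_conj_eq_neg (dftRoot_pow_pow_eq_one _) hu,
    map_inv₀, Complex.conj_ofReal]

end DFT

section EuclNorm

variable {m : ℕ}

lemma euclNorm_eq_mul_of_norm_eq {E E' : Type*} [SeminormedAddGroup E] [SeminormedAddGroup E']
    {x : Fin m → E} {y : Fin m → E'} {t : ℝ} (ht : 0 ≤ t) (h : ∀ i, ‖x i‖ = t * ‖y i‖) :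
    euclNorm x = t * euclNorm y := by
  simp only [euclNorm, h, mul_pow, ← mul_sum]
  rw [Real.sqrt_mul (sq_nonneg t), Real.sqrt_sq ht]

lemma euclNorm_mulVec_of_mem_unitaryGroup {U : Matrix (Fin m) (Fin m) ℂ}
    (hU : U ∈ unitaryGroup (Fin m) ℂ) (u : Fin m → ℂ) : euclNorm (U *ᵥ u) = euclNorm u := by
  have hsq : ∀ v : Fin m → ℂ, ((∑ i, ‖v i‖ ^ 2 : ℝ) : ℂ) = star v ⬝ᵥ v := fun v => by
    push_cast
    exact sum_congr rfl fun i _ => (Complex.conj_mul' (v i)).symm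
  suffices h : ((∑ i, ‖(U *ᵥ u) i‖ ^ 2 : ℝ) : ℂ) = ((∑ i, ‖u i‖ ^ 2 : ℝ) : ℂ) by
    rw [euclNorm, euclNorm, Complex.ofReal_injective h]
  rw [hsq, hsq, star_mulVec, dotProduct_mulVec, vecMul_vecMul, ← star_eq_conjTranspose,
    mem_unitaryGroup_iff'.mp hU, vecMul_one]

end EuclNorm

section Symmetrization

lemma conj_symmetrize {N : ℕ} (hN : 0 < N) {y : Fin N → ℂ} (hy : (y ⟨0, hN⟩).im = 0)
    (k : Fin (2 * N - 1)) : conj (symmetrize N y k) = symmetrize N y (-k) := by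
  have hk := k.isLt
  by_cases hk0 : (k : ℕ) = 0
  · have hneg : ((-k : Fin (2 * N - 1)) : ℕ) = 0 := by rw [Fin.val_neg', hk0]; simp
    simp only [symmetrize, hneg, hk0, dif_pos hN]
    exact Complex.conj_eq_iff_im.mpr hy
  · have hneg : ((-k : Fin (2 * N - 1)) : ℕ) = 2 * N - 1 - k := by
      rw [Fin.val_neg']; exact Nat.mod_eq_of_lt (by omega)
    simp only [symmetrize, hneg]
    split_ifs with hlt hlt'
    · omega
    · exact congrArg (conj ∘ y) (Fin.mk.inj_iff.mpr (by omega))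
    · exact Complex.conj_conj _
    · omega

lemma conj_symmetrizeZ {n : ℕ} (hn : 0 < n) {x : Fin n → ℂ} (hx : (x ⟨0, hn⟩).im = 0)
    (k : Fin (4 * n - 3)) : conj (symmetrizeZ n x k) = symmetrizeZ n x (-k) := by
  have hpad : (pad n (2 * n - 1) x ⟨0, by omega⟩).im = 0 := by rwa [pad, dif_pos hn]
  rw [symmetrizeZ, symmetrizeZ, conj_symmetrize (by omega) hpad]
  congr 1
  ext
  rw [Fin.val_neg', Fin.val_neg', Fin.val_mk, show 2 * (2 * n - 1) - 1 = 4 * n - 3 by omega]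

lemma symmetrizeZ_add (n : ℕ) (x y : Fin n → ℂ) :
    symmetrizeZ n (x + y) = symmetrizeZ n x + symmetrizeZ n y := by
  funext k
  simp only [symmetrizeZ, symmetrize, pad, Pi.add_apply]
  split_ifs <;> simp

lemma symmetrizeZ_sub (n : ℕ) (x y : Fin n → ℂ) :
    symmetrizeZ n (x - y) = symmetrizeZ n x - symmetrizeZ n y := by
  funext k
  simp only [symmetrizeZ, symmetrize, pad, Pi.sub_apply]
  split_ifs <;> simp

end Symmetrization

lemma sub_mul_add_eq_norm_sq_sub {z w : ℂ} (hz : conj z = z) (hw : conj w = w) :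
    (z - w) * (z + w) = ((‖z‖ ^ 2 - ‖w‖ ^ 2 : ℝ) : ℂ) := by
  push_cast
  rw [← Complex.mul_conj', ← Complex.mul_conj', hz, hw]
  ring

/-- `√ñ ‖|F𝒮_z(x₁)|² − |F𝒮_z(x₂)|²‖ = ‖𝒮_z(x₁−x₂) ⊛ 𝒮_z(x₁+x₂)‖` with `ñ = 4n-3`. -/
theorem dft_magnitude_difference_eq (n : ℕ) (hn : 0 < n) (x₁ x₂ : Fin n → ℂ)
    (h₁ : (x₁ ⟨0, hn⟩).im = 0) (h₂ : (x₂ ⟨0, hn⟩).im = 0) :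
    Real.sqrt (4 * n - 3) *
      euclNorm (fun k => ‖(dft (4 * n - 3)).mulVec (symmetrizeZ n x₁) k‖ ^ 2 -
        ‖(dft (4 * n - 3)).mulVec (symmetrizeZ n x₂) k‖ ^ 2) =
      euclNorm (cconv (symmetrizeZ n (x₁ - x₂)) (symmetrizeZ n (x₁ + x₂))) := by
  have : NeZero (4 * n - 3) := ⟨by omega⟩
  have hm : (4 * n - 3 : ℝ) = ((4 * n - 3 : ℕ) : ℝ) := by
    rw [Nat.cast_sub (by omega)]
    push_cast
    ring
  have hF : ∀ k, (dft (4 * n - 3) *ᵥ cconv (symmetrizeZ n (x₁ - x₂)) (symmetrizeZ n (x₁ + x₂))) k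
      = (√(4 * n - 3 : ℕ) : ℂ) * ((‖(dft (4 * n - 3) *ᵥ symmetrizeZ n x₁) k‖ ^ 2
          - ‖(dft (4 * n - 3) *ᵥ symmetrizeZ n x₂) k‖ ^ 2 : ℝ) : ℂ) := fun k => by
    rw [dft_mulVec_cconv, symmetrizeZ_sub, symmetrizeZ_add, mulVec_sub, mulVec_add,
      Pi.sub_apply, Pi.add_apply, sub_mul_add_eq_norm_sq_sub
        (conj_dft_mulVec_of_conj_eq_neg (conj_symmetrizeZ hn h₁) k)
        (conj_dft_mulVec_of_conj_eq_neg (conj_symmetrizeZ hn h₂) k)]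
  rw [← euclNorm_mulVec_of_mem_unitaryGroup dft_mem_unitaryGroup, hm]
  refine (euclNorm_eq_mul_of_norm_eq (Real.sqrt_nonneg _) fun k => ?_).symm
  rw [hF, norm_mul, Complex.norm_real, Complex.norm_real, Real.norm_of_nonneg (Real.sqrt_nonneg _)]
end
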